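/- If ξ₁ ≤ −log(1 − q(0)), then sup_{p ∈ [0,1)} ξ₂(p) ≥ ξ₁. -/

import Mathlib

open Finset

/-- `Q̃₂(ξ,p) = 1 − e^ξ + (1−p)·e^ξ·∑_{j=0}^b q(j)·p^j·e^{jξ}`, the numerator of the
critical-exponent equation for the algorithm class `𝒜₂`. -/
noncomputable def Qt2 (b : ℕ) (q : ℕ → ℝ) (ξ p : ℝ) : ℝ :=
  1 - Real.exp ξ + (1 - p) * Real.exp ξ *
    ∑ j ∈ Finset.range (b + 1), q j * p ^ j * Real.exp (j * ξ)

/-- `Q₁(ξ) = 1 − e^ξ·∑_{j=0}^a p₂(j)·e^{jξ}`, whose unique positive root is the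
critical exponent of the minimal-randomization algorithm `𝒢₁`. -/
noncomputable def Q1 (a : ℕ) (p₂ : ℕ → ℝ) (ξ : ℝ) : ℝ :=
  1 - Real.exp ξ * ∑ j ∈ Finset.range (a + 1), p₂ j * Real.exp (j * ξ)

/-! At `p = 0` the equation `Q̃₂(ξ, 0) = 0` reads `e^ξ (1 − q(0)) = 1`, so `ξ₂(0) = −log(1 − q(0))`,
which is at least `ξ₁` by assumption. The supremum is finite because every root of `Q̃₂(·, p)`
with `p e^ξ < 1` satisfies `e^ξ (1 − ∑ q) ≤ 1`, and `1 − ∑ q = ∑ p₂ > 0`. -/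

lemma sum_mul_pow_le_sum {ι : Type*} (s : Finset ι) (c : ι → ℝ) (n : ι → ℕ)
    (hc : ∀ i, 0 ≤ c i) {x : ℝ} (hx₀ : 0 ≤ x) (hx₁ : x ≤ 1) :
    ∑ i ∈ s, c i * x ^ n i ≤ ∑ i ∈ s, c i :=
  sum_le_sum fun i _ => mul_le_of_le_one_right (hc i) (pow_le_one₀ hx₀ hx₁)

lemma Qt2_eq (b : ℕ) (q : ℕ → ℝ) (ξ p : ℝ) :
    Qt2 b q ξ p = 1 - Real.exp ξ *
      (1 - (1 - p) * ∑ j ∈ range (b + 1), q j * (p * Real.exp ξ) ^ j) := by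
  simp only [Qt2, mul_pow, ← Real.exp_nat_mul, ← mul_assoc]
  ring

lemma Qt2_zero_right (b : ℕ) (q : ℕ → ℝ) (ξ : ℝ) :
    Qt2 b q ξ 0 = 1 - Real.exp ξ * (1 - q 0) := by
  rw [Qt2_eq, sum_eq_single_of_mem 0 (mem_range.2 b.succ_pos) fun j _ hj => by simp [hj]]
  simp

lemma Qt2_neg_log_one_sub_eq_zero (b : ℕ) (q : ℕ → ℝ) (hq₀ : q 0 < 1) :
    Qt2 b q (-Real.log (1 - q 0)) 0 = 0 := by
  have : 1 - q 0 ≠ 0 := by linarith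
  rw [Qt2_zero_right, Real.exp_neg, Real.exp_log (by linarith), inv_mul_cancel₀ this, sub_self]

lemma le_neg_log_of_Qt2_eq_zero (b : ℕ) (q : ℕ → ℝ) (hq : ∀ j, 0 ≤ q j)
    (hpos : 0 < 1 - ∑ j ∈ range (b + 1), q j) {ξ p : ℝ} (hp : 0 ≤ p)
    (hpξ : p * Real.exp ξ < 1) (hroot : Qt2 b q ξ p = 0) :
    ξ ≤ -Real.log (1 - ∑ j ∈ range (b + 1), q j) := by
  set S := ∑ j ∈ range (b + 1), q j * (p * Real.exp ξ) ^ j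
  have hx₀ : 0 ≤ p * Real.exp ξ := by positivity
  have hS₀ : 0 ≤ S := sum_nonneg fun j _ => mul_nonneg (hq j) (pow_nonneg hx₀ j)
  have hS₁ : S ≤ ∑ j ∈ range (b + 1), q j := sum_mul_pow_le_sum _ _ _ hq hx₀ hpξ.le
  have hexp : Real.exp ξ * (1 - (1 - p) * S) = 1 := by
    rw [Qt2_eq] at hroot
    linarith
  have hle : Real.exp ξ * (1 - ∑ j ∈ range (b + 1), q j) ≤ 1 := by
    have : (1 - p) * S ≤ ∑ j ∈ range (b + 1), q j := by nlinarith [mul_nonneg hp hS₀]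
    rw [← hexp]
    exact mul_le_mul_of_nonneg_left (by linarith) (Real.exp_pos ξ).le
  rw [← Real.log_inv, Real.le_log_iff_exp_le (inv_pos.2 hpos), le_inv_comm₀ (by positivity) hpos]
  rwa [← le_div_iff₀' (Real.exp_pos ξ), one_div] at hle

theorem stmt_16_general (a b : ℕ) (q p₂ : ℕ → ℝ)
    (hq : ∀ j, 0 ≤ q j)
    (hq0 : 0 < q 0) (hp₂pos : 0 < ∑ j ∈ Finset.range (a + 1), p₂ j)
    (hsum : ∑ j ∈ Finset.range (b + 1), q j + ∑ j ∈ Finset.range (a + 1), p₂ j = 1)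
    (ξ₁ : ℝ)
    (ξ₂ : ℝ → ℝ)
    (hξ₂ : ∀ p ∈ Set.Ico (0 : ℝ) 1,
      (0 < ξ₂ p ∧ p * Real.exp (ξ₂ p) < 1 ∧ Qt2 b q (ξ₂ p) p = 0) ∧
      ∀ ξ : ℝ, 0 < ξ → p * Real.exp ξ < 1 → Qt2 b q ξ p = 0 → ξ = ξ₂ p)
    (hcond : ξ₁ ≤ -Real.log (1 - q 0)) :
    ξ₁ ≤ sSup (ξ₂ '' Set.Ico (0 : ℝ) 1) := by
  have hzero : (0 : ℝ) ∈ Set.Ico (0 : ℝ) 1 := ⟨le_rfl, one_pos⟩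
  have hq₀ : q 0 < 1 := by
    linarith [single_le_sum (fun j _ => hq j) (mem_range.2 b.succ_pos)]
  have hξ₂_zero : ξ₂ 0 = -Real.log (1 - q 0) :=
    ((hξ₂ 0 hzero).2 _ (by linarith [Real.log_neg (by linarith) (by linarith : 1 - q 0 < 1)])
      (by simp) (Qt2_neg_log_one_sub_eq_zero b q hq₀)).symm
  have hbdd : BddAbove (ξ₂ '' Set.Ico (0 : ℝ) 1) := by
    refine ⟨-Real.log (1 - ∑ j ∈ range (b + 1), q j), Set.forall_mem_image.2 fun p hp => ?_⟩
    obtain ⟨-, hpξ, hroot⟩ := (hξ₂ p hp).1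
    exact le_neg_log_of_Qt2_eq_zero b q hq (by linarith) hp.1 hpξ hroot
  calc ξ₁ ≤ ξ₂ 0 := hξ₂_zero ▸ hcond
    _ ≤ sSup (ξ₂ '' Set.Ico (0 : ℝ) 1) := le_csSup hbdd ⟨0, hzero, rfl⟩

/-- If `ξ₁ ≤ −log(1 − q(0))`, then `sup_{p ∈ [0,1)} ξ₂(p) ≥ ξ₁`. -/
theorem stmt_16 (a b : ℕ) (q p₂ : ℕ → ℝ)
    (hq : ∀ j, 0 ≤ q j) (hp₂ : ∀ j, 0 ≤ p₂ j)
    (hqb : ∀ j, b < j → q j = 0) (hp₂a : ∀ j, a < j → p₂ j = 0)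
    (hq0 : 0 < q 0) (hp₂pos : 0 < ∑ j ∈ Finset.range (a + 1), p₂ j)
    (hsum : ∑ j ∈ Finset.range (b + 1), q j + ∑ j ∈ Finset.range (a + 1), p₂ j = 1)
    (ξ₁ : ℝ) (hξ₁ : 0 < ξ₁ ∧ Q1 a p₂ ξ₁ = 0 ∧ ∀ ξ : ℝ, 0 < ξ → Q1 a p₂ ξ = 0 → ξ = ξ₁)
    (ξ₂ : ℝ → ℝ)
    (hξ₂ : ∀ p ∈ Set.Ico (0 : ℝ) 1,
      (0 < ξ₂ p ∧ p * Real.exp (ξ₂ p) < 1 ∧ Qt2 b q (ξ₂ p) p = 0) ∧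
      ∀ ξ : ℝ, 0 < ξ → p * Real.exp ξ < 1 → Qt2 b q ξ p = 0 → ξ = ξ₂ p)
    (hcond : ξ₁ ≤ -Real.log (1 - q 0)) :
    ξ₁ ≤ sSup (ξ₂ '' Set.Ico (0 : ℝ) 1) :=
  stmt_16_general a b q p₂ hq hq0 hp₂pos hsum ξ₁ ξ₂ hξ₂ hcond
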